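/- arXiv:2104.04838 — 6 statements merged into one kernel-verified Lean document; each statement's English description precedes it below -/
import Mathlib

section
/- Let X, Y be measurable spaces, c : X × Y → (-∞, ∞] measurable, and μ, ν probability measures on X, Y respectively. If for every measurable A ⊆ X one has μ(A) + ν({y : ∀ x ∈ A, c(x,y) = ∞}) ≤ 1, then for every measurable B ⊆ Y one has ν(B) + μ({x : ∀ y ∈ B, c(x,y) = ∞}) ≤ 1. That is, c-compatibility is a symmetric notion. -/
open MeasureTheory

theorem cCompatible_symm_general {X Y : Type*} [MeasurableSpace X] [MeasurableSpace Y]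
    (c : X → Y → EReal)
    (hmeasX : ∀ B : Set Y, MeasurableSet {x | ∀ y ∈ B, c x y = ⊤})
    (μ : Measure X) (ν : Measure Y)
    (h : ∀ A : Set X, MeasurableSet A → μ A + ν {y | ∀ x ∈ A, c x y = ⊤} ≤ 1) :
    ∀ B : Set Y, MeasurableSet B → ν B + μ {x | ∀ y ∈ B, c x y = ⊤} ≤ 1 := by
  intro B _
  -- The two dual sets are the polars of the relation `c x y = ⊤`, and `B` lies in its double polar.
  let r : X → Y → Prop := fun x y => c x y = ⊤
  calc ν B + μ (lowerPolar r B)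
      ≤ ν (upperPolar r (lowerPolar r B)) + μ (lowerPolar r B) := by
        gcongr; exact subset_upperPolar_lowerPolar r B
    _ ≤ 1 := by rw [add_comm]; exact h _ (hmeasX B)

/-- `c`-compatibility is a symmetric notion: if
`μ(A) + ν({y : ∀ x ∈ A, c(x,y) = ∞}) ≤ 1` for all measurable `A ⊆ X`, then
`ν(B) + μ({x : ∀ y ∈ B, c(x,y) = ∞}) ≤ 1` for all measurable `B ⊆ Y`.
(The relevant "dual" sets are assumed measurable.) -/
theorem cCompatible_symm {X Y : Type*} [MeasurableSpace X] [MeasurableSpace Y]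
    (c : X → Y → EReal) (hbot : ∀ x y, c x y ≠ ⊥)
    (hmeasY : ∀ A : Set X, MeasurableSet {y | ∀ x ∈ A, c x y = ⊤})
    (hmeasX : ∀ B : Set Y, MeasurableSet {x | ∀ y ∈ B, c x y = ⊤})
    (μ : Measure X) (ν : Measure Y) [IsProbabilityMeasure μ] [IsProbabilityMeasure ν]
    (h : ∀ A : Set X, MeasurableSet A → μ A + ν {y | ∀ x ∈ A, c x y = ⊤} ≤ 1) :
    ∀ B : Set Y, MeasurableSet B → ν B + μ {x | ∀ y ∈ B, c x y = ⊤} ≤ 1 :=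
  cCompatible_symm_general c hmeasX μ ν h
end

section
/- Let c : X × Y → (-∞, ∞] be a symmetric cost function on a common space X = Y, with c-duality taken with t = ∞ (so K^c = {y : ∀ x ∈ K, c(x,y) = ∞}). Probability measures μ and ν are c-compatible if and only if for every set K with K = K^{cc} one has ν(K^c) ≤ 1 − μ(K). -/
open MeasureTheory

/-- The `c`-dual at threshold `t = ∞` of a set `K`: `K^c = {y : ∀ x ∈ K, c(x,y) = ∞}`. -/
def cDualInf {X : Type*} (c : X → X → EReal) (K : Set X) : Set X :=
  {y | ∀ x ∈ K, c x y = ⊤}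

/-! Compatibility is decided on the `c`-class hull `A^{cc}` of `A`: for a symmetric cost
`A ⊆ A^{cc}` and `A^{ccc} = A^c`, so passing from `A` to its hull raises `μ A` and keeps `A^c`. -/

section CDual

variable {X : Type*} (c : X → X → EReal)

theorem cDualInf_anti : Antitone (cDualInf c) :=
  fun _ _ hAB _ hy x hx => hy x (hAB hx)

variable {c}

theorem subset_cDualInf_cDualInf (hsymm : ∀ x y, c x y = c y x) (A : Set X) :
    A ⊆ cDualInf c (cDualInf c A) :=
  fun x hx y hy => (hsymm y x).trans (hy x hx)

theorem cDualInf_cDualInf_cDualInf (hsymm : ∀ x y, c x y = c y x) (A : Set X) :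
    cDualInf c (cDualInf c (cDualInf c A)) = cDualInf c A :=
  (cDualInf_anti c (subset_cDualInf_cDualInf hsymm A)).antisymm
    (subset_cDualInf_cDualInf hsymm _)

end CDual

theorem cCompatible_iff_cClass_sets_general {X : Type*} [MeasurableSpace X]
    (c : X → X → EReal) (hsymm : ∀ x y, c x y = c y x)
    (μ ν : Measure X) [IsProbabilityMeasure μ] :
    (∀ A : Set X, μ A + ν (cDualInf c A) ≤ 1) ↔
      (∀ K : Set X, cDualInf c (cDualInf c K) = K → ν (cDualInf c K) ≤ 1 - μ K) := by
  have add_le_one_iff (K : Set X) : μ K + ν (cDualInf c K) ≤ 1 ↔ ν (cDualInf c K) ≤ 1 - μ K :=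
    (ENNReal.le_sub_iff_add_le_left (measure_ne_top μ K) prob_le_one).symm
  refine ⟨fun h K _ => (add_le_one_iff K).mp (h K), fun h A => ?_⟩
  have hull_dual : cDualInf c (cDualInf c (cDualInf c A)) = cDualInf c A :=
    cDualInf_cDualInf_cDualInf hsymm A
  have hull := (add_le_one_iff _).mpr (h _ (congrArg (cDualInf c) hull_dual))
  rw [hull_dual] at hull
  calc μ A + ν (cDualInf c A)
      ≤ μ (cDualInf c (cDualInf c A)) + ν (cDualInf c A) :=
        add_le_add_left (measure_mono (subset_cDualInf_cDualInf hsymm A)) _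
    _ ≤ 1 := hull

/-- for a symmetric cost on `X = Y`, probability measures `μ, ν` are
`c`-compatible iff for every `c`-class set `K` (i.e. `K = K^{cc}`) one has
`ν(K^c) ≤ 1 − μ(K)`. -/
theorem cCompatible_iff_cClass_sets {X : Type*} [MeasurableSpace X]
    (c : X → X → EReal) (hbot : ∀ x y, c x y ≠ ⊥) (hsymm : ∀ x y, c x y = c y x)
    (μ ν : Measure X) [IsProbabilityMeasure μ] [IsProbabilityMeasure ν] :
    (∀ A : Set X, μ A + ν (cDualInf c A) ≤ 1) ↔
      (∀ K : Set X, cDualInf c (cDualInf c K) = K → ν (cDualInf c K) ≤ 1 - μ K) :=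
  cCompatible_iff_cClass_sets_general c hsymm μ ν
end

section
/- Let X be a measure space, Y a finite set {u_1, ..., u_m}, c : X × Y → (-∞, ∞] measurable, and μ a probability measure on X supported on {x : ∃ i, c(x, u_i) < ∞}. For I ⊆ [m] let A_I = {x ∈ X : ∃ i ∈ I, c(x, u_i) < ∞}, and define the Hall polytope P = {α ∈ Δ_m : for all I ⊆ [m], Σ_{i∈I} α_i ≤ μ(A_I)}, where Δ_m is the standard simplex. Then for any α ∈ Δ_m, the discrete measure ν = Σ α_i δ_{u_i} is c-compatible with μ if and only if α ∈ P. -/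
/-!
`A ⊆ (A_I)ᶜ` holds iff every target in `I` is at infinite cost from all of `A`. So among the sets
`A` that block the targets `I`, the largest is `(A_I)ᶜ`, and its compatibility condition
`μ (A_I)ᶜ + ν(I) ≤ 1`, which is `ν(I) ≤ μ(A_I)`, implies that of all the others.
-/

open MeasureTheory

/-- The set `A_I = {x : ∃ i ∈ I, c(x,u_i) < ∞}` (the target space is identified with `Fin m`). -/
def hallSet {X : Type*} {m : ℕ} (c : X → Fin m → EReal) (I : Finset (Fin m)) : Set X :=
  {x | ∃ i ∈ I, c x i ≠ ⊤}

/-- The discrete measure `ν = Σ α_i δ_{u_i}` on `Fin m`. -/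
noncomputable def discreteMeasure {m : ℕ} (α : Fin m → ℝ) : Measure (Fin m) :=
  ∑ i, ENNReal.ofReal (α i) • Measure.dirac i

lemma discreteMeasure_coe_finset {m : ℕ} {α : Fin m → ℝ} (hα : ∀ i, 0 ≤ α i)
    (I : Finset (Fin m)) :
    discreteMeasure α I = ENNReal.ofReal (∑ i ∈ I, α i) := by
  classical
  rw [ENNReal.ofReal_sum_of_nonneg fun i _ => hα i, discreteMeasure, Measure.finsetSum_apply,
    ← Finset.sum_filter_of_ne (p := (· ∈ I)) (by simp_all), Finset.filter_mem_eq_inter,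
    Finset.univ_inter]
  refine Finset.sum_congr rfl fun i hi => ?_
  simp [Measure.dirac_apply', hi]

lemma measurableSet_hallSet {X : Type*} [MeasurableSpace X] {m : ℕ} {c : X → Fin m → EReal}
    (hc : ∀ i, MeasurableSet {x | c x i ≠ ⊤}) (I : Finset (Fin m)) :
    MeasurableSet (hallSet c I) := by
  have : hallSet c I = ⋃ i ∈ I, {x | c x i ≠ ⊤} := by ext x; simp [hallSet]
  exact this ▸ .biUnion I.countable_toSet fun i _ => hc i

lemma subset_compl_hallSet_iff {X : Type*} {m : ℕ} {c : X → Fin m → EReal} {A : Set X}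
    {I : Finset (Fin m)} :
    A ⊆ (hallSet c I)ᶜ ↔ (I : Set (Fin m)) ⊆ {i | ∀ x ∈ A, c x i = ⊤} := by
  simp only [Set.subset_def, hallSet, Set.mem_compl_iff, Set.mem_ofPred_eq, Finset.mem_coe]
  grind

lemma le_measure_iff_measure_compl_add_le_one {X : Type*} [MeasurableSpace X] {μ : Measure X}
    [IsProbabilityMeasure μ] {s : Set X} (hs : MeasurableSet s) {a : ENNReal} :
    a ≤ μ s ↔ μ sᶜ + a ≤ 1 := by
  rw [← measure_univ (μ := μ), ← measure_add_measure_compl hs, add_comm (μ s),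
    ENNReal.add_le_add_iff_left (measure_ne_top μ _)]

theorem cCompatible_iff_mem_hallPolytope_general {X : Type*} [MeasurableSpace X] {m : ℕ}
    (c : X → Fin m → EReal)
    (hA : ∀ i : Fin m, MeasurableSet {x | c x i ≠ ⊤})
    (μ : Measure X) [IsProbabilityMeasure μ]
    (α : Fin m → ℝ) (hα0 : ∀ i, 0 ≤ α i) :
    (∀ A : Set X, MeasurableSet A →
        μ A + discreteMeasure α {i | ∀ x ∈ A, c x i = ⊤} ≤ 1) ↔
      (∀ I : Finset (Fin m), ∑ i ∈ I, α i ≤ (μ (hallSet c I)).toReal) := by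
  classical
  simp_rw [← ENNReal.ofReal_le_iff_le_toReal (measure_ne_top μ _),
    ← discreteMeasure_coe_finset hα0,
    le_measure_iff_measure_compl_add_le_one (measurableSet_hallSet hA _)]
  constructor
  · intro h I
    calc μ (hallSet c I)ᶜ + discreteMeasure α I
        ≤ μ (hallSet c I)ᶜ + discreteMeasure α {i | ∀ x ∈ (hallSet c I)ᶜ, c x i = ⊤} := by
          gcongr; exact subset_compl_hallSet_iff.1 le_rfl
      _ ≤ 1 := h _ (measurableSet_hallSet hA I).compl
  · intro h A _
    set I := {i | ∀ x ∈ A, c x i = ⊤}.toFinset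
    have hAI : A ⊆ (hallSet c I)ᶜ := subset_compl_hallSet_iff.2 (by simp [I])
    calc μ A + discreteMeasure α {i | ∀ x ∈ A, c x i = ⊤}
        ≤ μ (hallSet c I)ᶜ + discreteMeasure α I :=
          add_le_add (measure_mono hAI) (by simp [I])
      _ ≤ 1 := h I

/-- with `μ` supported on `{x : ∃ i, c(x,u_i) < ∞}`, the discrete measure
`ν = Σ α_i δ_{u_i}` is `c`-compatible with `μ` iff `α` belongs to the Hall polytope,
i.e. `Σ_{i∈I} α_i ≤ μ(A_I)` for all `I ⊆ [m]`. -/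
theorem cCompatible_iff_mem_hallPolytope {X : Type*} [MeasurableSpace X] {m : ℕ}
    (c : X → Fin m → EReal) (hbot : ∀ x i, c x i ≠ ⊥)
    (hA : ∀ i : Fin m, MeasurableSet {x | c x i ≠ ⊤})
    (μ : Measure X) [IsProbabilityMeasure μ]
    (hsupp : μ {x | ∀ i, c x i = ⊤} = 0)
    (α : Fin m → ℝ) (hα0 : ∀ i, 0 ≤ α i) (hα1 : ∑ i, α i = 1) :
    (∀ A : Set X, MeasurableSet A →
        μ A + discreteMeasure α {i | ∀ x ∈ A, c x i = ⊤} ≤ 1) ↔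
      (∀ I : Finset (Fin m), ∑ i ∈ I, α i ≤ (μ (hallSet c I)).toReal) :=
  cCompatible_iff_mem_hallPolytope_general c hA μ α hα0
end

section
/- Let P = P((u_i)_{i=1}^m, μ) be a Hall polytope and for I ⊆ [m] let F_I = {α ∈ P : Σ_{i∈I} α_i = μ(A_I)} (with F_∅ = P). Then for any I, J ⊆ [m], F_I ∩ F_J ⊆ F_{I∩J}. -/
/-!
A point `α` of the Hall polytope satisfies `∑_{i ∈ K} α i ≤ μ(A_K)` for every `K`. The left side
is modular in `K`, while `K ↦ μ(A_K) = μ(⋃_{i ∈ K} {x | c x i ≠ ⊤})` is submodular, since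
`A_{I ∪ J} = A_I ∪ A_J` and `A_{I ∩ J} ⊆ A_I ∩ A_J`. Hence if the inequality is tight at `I` and
at `J`, then adding the inequalities at `I ∪ J` and `I ∩ J` leaves no slack, and both are tight.
-/

open MeasureTheory

lemma hallSet_eq_biUnion {X : Type*} {m : ℕ} (c : X → Fin m → EReal) (I : Finset (Fin m)) :
    hallSet c I = ⋃ i ∈ I, {x | c x i ≠ ⊤} := by
  ext x
  simp [hallSet]

lemma Finset.set_biUnion_inter_subset {ι X : Type*} [DecidableEq ι] (I J : Finset ι)
    (S : ι → Set X) : ⋃ i ∈ I ∩ J, S i ⊆ (⋃ i ∈ I, S i) ∩ ⋃ i ∈ J, S i :=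
  Set.subset_inter
    (Set.biUnion_subset_biUnion_left fun _ hi => (Finset.mem_inter.1 hi).1)
    (Set.biUnion_subset_biUnion_left fun _ hi => (Finset.mem_inter.1 hi).2)

lemma measureReal_biUnion_union_add_inter_le {ι X : Type*} [DecidableEq ι] [MeasurableSpace X]
    (μ : Measure X) [IsFiniteMeasure μ] {S : ι → Set X} (hS : ∀ i, MeasurableSet (S i))
    (I J : Finset ι) :
    μ.real (⋃ i ∈ I ∪ J, S i) + μ.real (⋃ i ∈ I ∩ J, S i)
      ≤ μ.real (⋃ i ∈ I, S i) + μ.real (⋃ i ∈ J, S i) := by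
  rw [Finset.set_biUnion_union, ← measureReal_union_add_inter'
    (I.measurableSet_biUnion fun i _ => hS i) (measure_ne_top _ _) (measure_ne_top _ _)]
  exact add_le_add_right
    (measureReal_mono (Finset.set_biUnion_inter_subset I J S) (measure_ne_top _ _)) _

theorem hallPolytope_face_inter_general {X : Type*} [MeasurableSpace X] {m : ℕ}
    (c : X → Fin m → EReal)
    (hA : ∀ i : Fin m, MeasurableSet {x | c x i ≠ ⊤})
    (μ : Measure X) [IsProbabilityMeasure μ]
    (I J : Finset (Fin m)) (α : Fin m → ℝ)
    (hP : ∀ K : Finset (Fin m), ∑ i ∈ K, α i ≤ (μ (hallSet c K)).toReal)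
    (hI : ∑ i ∈ I, α i = (μ (hallSet c I)).toReal)
    (hJ : ∑ i ∈ J, α i = (μ (hallSet c J)).toReal) :
    ∑ i ∈ I ∩ J, α i = (μ (hallSet c (I ∩ J))).toReal := by
  have hsubmod : (μ (hallSet c (I ∪ J))).toReal + (μ (hallSet c (I ∩ J))).toReal
      ≤ (μ (hallSet c I)).toReal + (μ (hallSet c J)).toReal := by
    simpa only [hallSet_eq_biUnion, measureReal_def] using
      measureReal_biUnion_union_add_inter_le μ hA I J
  have hmodular := Finset.sum_union_inter (s₁ := I) (s₂ := J) (f := α)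
  linarith [hP (I ∪ J), hP (I ∩ J)]

/-- for the faces `F_I = {α ∈ P : Σ_{i∈I} α_i = μ(A_I)}` of the Hall polytope,
`F_I ∩ F_J ⊆ F_{I∩J}`. -/
theorem hallPolytope_face_inter {X : Type*} [MeasurableSpace X] {m : ℕ}
    (c : X → Fin m → EReal) (hbot : ∀ x i, c x i ≠ ⊥)
    (hA : ∀ i : Fin m, MeasurableSet {x | c x i ≠ ⊤})
    (μ : Measure X) [IsProbabilityMeasure μ]
    (hsupp : μ {x | ∀ i, c x i = ⊤} = 0)
    (I J : Finset (Fin m)) (α : Fin m → ℝ)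
    (hα0 : ∀ i, 0 ≤ α i) (hα1 : ∑ i, α i = 1)
    (hP : ∀ K : Finset (Fin m), ∑ i ∈ K, α i ≤ (μ (hallSet c K)).toReal)
    (hI : ∑ i ∈ I, α i = (μ (hallSet c I)).toReal)
    (hJ : ∑ i ∈ J, α i = (μ (hallSet c J)).toReal) :
    ∑ i ∈ I ∩ J, α i = (μ (hallSet c (I ∩ J))).toReal :=
  hallPolytope_face_inter_general c hA μ I J α hP hI hJ
end

section
/- Let φ : ℝ^n → [0, ∞] be a lower semi-continuous convex function with φ(0) = 0, and define the polarity transform Aφ(y) = sup{(⟨x,y⟩ − 1)/φ(x) : ⟨x,y⟩ > 1} and the polar subgradient ∂°φ = {(x,y) : φ(x)·Aφ(y) = ⟨x,y⟩ − 1 > 0}. Let x satisfy 0 < φ(x) < ∞. Then for any z in the classical subdifferential ∂φ(x) with ⟨x,z⟩ ≠ φ(x), the point y = z / (⟨x,z⟩ − φ(x)) belongs to ∂°φ(x). -/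
open scoped RealInnerProductSpace

/-- The polarity transform `Aφ(y) = sup{(⟨w,y⟩ − 1)/φ(w) : ⟨w,y⟩ > 1}`, with the
conventions that the supremum over the empty set is `0` and that a point with
`φ(w) = 0` (and `⟨w,y⟩ > 1`) contributes `+∞`. -/
noncomputable def polarTransform {n : ℕ} (φ : EuclideanSpace ℝ (Fin n) → EReal)
    (y : EuclideanSpace ℝ (Fin n)) : EReal :=
  ⨆ w, if 1 < ⟪w, y⟫ then
    (if φ w = 0 then ⊤ else ((⟪w, y⟫ - 1 : ℝ) : EReal) / φ w) else 0

/-!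
The subgradient inequality at `w = 0` says `φ(x) ≤ ⟨x,z⟩`, so `c = φ(x)` is finite and
`t = ⟨x,z⟩ − c > 0`. With `y = z / t` we get `t (⟨x,y⟩ − 1) = c`, and at any `w` the inequality
reads `φ(w) ≥ t (⟨w,y⟩ − 1)`: every quotient in the supremum defining `Aφ(y)` is at most `1/t`,
and the one at `w = x` equals `1/t`. Hence `Aφ(y) = 1/t` and `φ(x) Aφ(y) = c/t = ⟨x,y⟩ − 1`.
-/

theorem EReal.coe_div_le_inv_of_mul_le {s t : ℝ} {a : EReal} (hs : 0 < s) (ht : 0 < t)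
    (h : ((t * s : ℝ) : EReal) ≤ a) : (s : EReal) / a ≤ ((t⁻¹ : ℝ) : EReal) := by
  induction a using EReal.rec with
  | bot => exact absurd (le_bot_iff.1 h) (EReal.coe_ne_bot _)
  | coe r =>
    have hr : t * s ≤ r := EReal.coe_le_coe_iff.1 h
    rw [← EReal.coe_div, EReal.coe_le_coe_iff,
      div_le_iff₀ ((mul_pos ht hs).trans_le hr), inv_mul_eq_div, le_div_iff₀ ht]
    linarith
  | top => rw [EReal.div_top]; exact_mod_cast (inv_pos.2 ht).le

theorem le_inner_of_subgradient {E : Type*} [NormedAddCommGroup E] [InnerProductSpace ℝ E]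
    {f : E → EReal} (h0 : f 0 = 0) {x z : E}
    (hz : ∀ w, f x + ((⟪w - x, z⟫ : ℝ) : EReal) ≤ f w) : f x ≤ ((⟪x, z⟫ : ℝ) : EReal) := by
  have h := hz 0
  rw [h0, zero_sub, inner_neg_left, EReal.coe_neg, ← sub_eq_add_neg,
    EReal.sub_le_iff_le_add (.inl (EReal.coe_ne_bot _)) (.inl (EReal.coe_ne_top _)),
    zero_add] at h
  exact h

section PolarTransform

variable {n : ℕ} {φ : EuclideanSpace ℝ (Fin n) → EReal} {y : EuclideanSpace ℝ (Fin n)}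

theorem coe_div_le_polarTransform {w : EuclideanSpace ℝ (Fin n)} (hw : 1 < ⟪w, y⟫)
    (hφw : φ w ≠ 0) : ((⟪w, y⟫ - 1 : ℝ) : EReal) / φ w ≤ polarTransform φ y := by
  refine le_iSup_of_le w ?_
  rw [if_pos hw, if_neg hφw]

theorem polarTransform_le_inv {t : ℝ} (ht : 0 < t)
    (hbound : ∀ w, ((t * (⟪w, y⟫ - 1) : ℝ) : EReal) ≤ φ w) :
    polarTransform φ y ≤ ((t⁻¹ : ℝ) : EReal) := by
  refine iSup_le fun w => ?_
  split_ifs with hw hφw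
  · have hpos : (0 : ℝ) < t * (⟪w, y⟫ - 1) := mul_pos ht (sub_pos.2 hw)
    exact absurd (hφw ▸ hbound w) (by exact_mod_cast hpos.not_ge)
  · exact EReal.coe_div_le_inv_of_mul_le (sub_pos.2 hw) ht (hbound w)
  · exact_mod_cast (inv_pos.2 ht).le

theorem polarTransform_eq_inv {x : EuclideanSpace ℝ (Fin n)} {c t : ℝ} (hφx : φ x = c)
    (hc : 0 < c) (ht : 0 < t) (hxy : t * (⟪x, y⟫ - 1) = c)
    (hbound : ∀ w, ((t * (⟪w, y⟫ - 1) : ℝ) : EReal) ≤ φ w) :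
    polarTransform φ y = ((t⁻¹ : ℝ) : EReal) := by
  refine (polarTransform_le_inv ht hbound).antisymm ?_
  have hxy1 : 1 < ⟪x, y⟫ := by nlinarith
  have hquot : (⟪x, y⟫ - 1) / c = t⁻¹ := by
    rw [← hxy]; field_simp [(sub_pos.2 hxy1).ne']
  calc ((t⁻¹ : ℝ) : EReal) = ((⟪x, y⟫ - 1 : ℝ) : EReal) / φ x := by
        rw [hφx, ← EReal.coe_div, hquot]
    _ ≤ polarTransform φ y :=
        coe_div_le_polarTransform hxy1 (by rw [hφx]; exact_mod_cast hc.ne')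

end PolarTransform

theorem polar_subgradient_of_subgradient_general {n : ℕ}
    (φ : EuclideanSpace ℝ (Fin n) → EReal)
    (h0 : φ 0 = 0)
    (x z : EuclideanSpace ℝ (Fin n)) (hφx : 0 < φ x)
    (hz : ∀ w, φ x + ((⟪w - x, z⟫ : ℝ) : EReal) ≤ φ w)
    (hne : ((⟪x, z⟫ : ℝ) : EReal) ≠ φ x)
    (y : EuclideanSpace ℝ (Fin n)) (hy : y = (⟪x, z⟫ - (φ x).toReal)⁻¹ • z) :
    φ x * polarTransform φ y = ((⟪x, y⟫ - 1 : ℝ) : EReal) ∧ 1 < ⟪x, y⟫ := by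
  have hle := le_inner_of_subgradient h0 hz
  set c := (φ x).toReal
  have hc : φ x = c :=
    (EReal.coe_toReal (hle.trans_lt (EReal.coe_lt_top _)).ne (ne_bot_of_gt hφx)).symm
  rw [hc] at hφx hle hne hz ⊢
  have hc0 : 0 < c := by exact_mod_cast hφx
  set t := ⟪x, z⟫ - c
  have ht : 0 < t :=
    sub_pos.2 ((EReal.coe_le_coe_iff.1 hle).lt_of_ne (by exact_mod_cast hne.symm))
  have hzy : z = t • y := by rw [hy, smul_smul, mul_inv_cancel₀ ht.ne', one_smul]
  have hxy : t * (⟪x, y⟫ - 1) = c := by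
    rw [mul_sub, ← inner_smul_right, ← hzy]; ring
  have hbound : ∀ w, ((t * (⟪w, y⟫ - 1) : ℝ) : EReal) ≤ φ w := fun w => by
    have hsub : c + ⟪w - x, z⟫ = t * (⟪w, y⟫ - 1) := by
      rw [hzy, inner_smul_right, inner_sub_left]; linarith
    rw [← hsub, EReal.coe_add]; exact hz w
  refine ⟨?_, by nlinarith⟩
  rw [polarTransform_eq_inv hc hc0 ht hxy hbound, ← EReal.coe_mul, ← hxy]
  congr 1; field_simp

/-- for `φ ∈ Cvx₀(ℝⁿ)` and `x` with `0 < φ(x) < ∞`, if `z ∈ ∂φ(x)`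
(classical subdifferential) with `⟨x,z⟩ ≠ φ(x)`, then `y = z/(⟨x,z⟩ − φ(x))` belongs to
the polar subgradient `∂°φ(x) = {y : φ(x)·Aφ(y) = ⟨x,y⟩ − 1 > 0}`. -/
theorem polar_subgradient_of_subgradient {n : ℕ}
    (φ : EuclideanSpace ℝ (Fin n) → EReal)
    (hpos : ∀ w, 0 ≤ φ w) (h0 : φ 0 = 0)
    (hlsc : LowerSemicontinuous φ)
    (hconv : ∀ (u v : EuclideanSpace ℝ (Fin n)) (a b : ℝ), 0 ≤ a → 0 ≤ b → a + b = 1 →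
      φ (a • u + b • v) ≤ (a : EReal) * φ u + (b : EReal) * φ v)
    (x z : EuclideanSpace ℝ (Fin n)) (hφx : 0 < φ x) (hφx' : φ x ≠ ⊤)
    (hz : ∀ w, φ x + ((⟪w - x, z⟫ : ℝ) : EReal) ≤ φ w)
    (hne : ((⟪x, z⟫ : ℝ) : EReal) ≠ φ x)
    (y : EuclideanSpace ℝ (Fin n)) (hy : y = (⟪x, z⟫ - (φ x).toReal)⁻¹ • z) :
    φ x * polarTransform φ y = ((⟪x, y⟫ - 1 : ℝ) : EReal) ∧ 1 < ⟪x, y⟫ :=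
  polar_subgradient_of_subgradient_general φ h0 x z hφx hz hne y hy
end

section
/- Let φ ∈ Cvx_0(ℝ^n) and x with 0 < φ(x) < ∞. For any y ∈ ∂°φ(x) (so φ(x)·Aφ(y) = ⟨x,y⟩ − 1 > 0), the point z = y·φ(x)/(⟨x,y⟩ − 1) belongs to the classical subdifferential ∂φ(x), satisfies ⟨x,z⟩ ≠ φ(x), and y = z/(⟨x,z⟩ − φ(x)). -/
open scoped RealInnerProductSpace

/-!
Write `c = φ(x)` and `s = ⟨x,y⟩ − 1`. The relation `c · Aφ(y) = s` forces `Aφ(y) = s/c`, and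
unfolding the supremum turns `Aφ(y) ≤ s/c` into the bound `(c/s)(⟨w,y⟩ − 1) ≤ φ(w)` for every
`w`: an affine minorant of `φ` with slope `z = (c/s) y` that touches `φ` at `x`. Any such
slope is a subgradient at `x`, and `⟨x,z⟩ − φ(x) = c/s` recovers `y` from `z`.
-/

theorem EReal.eq_coe_div_of_coe_mul_eq {c r : ℝ} {t : EReal} (hc : 0 < c)
    (h : (c : EReal) * t = r) : t = ((r / c : ℝ) : EReal) := by
  have ht_top : t ≠ ⊤ := by
    rintro rfl
    rw [EReal.coe_mul_top_of_pos hc] at h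
    exact EReal.top_ne_coe r h
  have ht_bot : t ≠ ⊥ := by
    rintro rfl
    rw [EReal.coe_mul_bot_of_pos hc] at h
    exact EReal.bot_ne_coe r h
  rw [← EReal.coe_toReal ht_top ht_bot, ← EReal.coe_mul, EReal.coe_eq_coe_iff] at h
  rw [← EReal.coe_toReal ht_top ht_bot, EReal.coe_eq_coe_iff, eq_div_iff hc.ne', mul_comm, h]

theorem forall_add_inner_sub_le_of_affine_minorant {E : Type*} [NormedAddCommGroup E]
    [InnerProductSpace ℝ E] {φ : E → EReal} {x z : E} {b : ℝ}
    (hle : ∀ w, ((⟪w, z⟫ + b : ℝ) : EReal) ≤ φ w) (hx : φ x = ((⟪x, z⟫ + b : ℝ) : EReal)) :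
    ∀ w, φ x + ((⟪w - x, z⟫ : ℝ) : EReal) ≤ φ w := by
  intro w
  rw [hx, ← EReal.coe_add, inner_sub_left]
  convert hle w using 2
  ring

theorem coe_div_le_of_polarTransform_le {n : ℕ} {φ : EuclideanSpace ℝ (Fin n) → EReal}
    {y : EuclideanSpace ℝ (Fin n)} (hpos : ∀ w, 0 ≤ φ w) {a : ℝ} (ha : 0 < a)
    (hA : polarTransform φ y ≤ a) (w : EuclideanSpace ℝ (Fin n)) :
    (((⟪w, y⟫ - 1) / a : ℝ) : EReal) ≤ φ w := by
  by_cases hw : 1 < ⟪w, y⟫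
  swap
  · have : (⟪w, y⟫ - 1) / a ≤ 0 := div_nonpos_of_nonpos_of_nonneg (by linarith) ha.le
    exact (EReal.coe_nonpos.2 this).trans (hpos w)
  have hterm : (if φ w = 0 then ⊤ else ((⟪w, y⟫ - 1 : ℝ) : EReal) / φ w) ≤ a :=
    le_trans (le_iSup_of_le w (if_pos hw).ge) hA
  by_cases h0 : φ w = 0
  · rw [if_pos h0] at hterm
    exact absurd hterm (by simp)
  by_cases htop : φ w = ⊤
  · exact htop ▸ le_top
  rw [if_neg h0] at hterm
  have hp : 0 < (φ w).toReal := EReal.toReal_pos ((hpos w).lt_of_ne' h0) htop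
  have hbot : φ w ≠ ⊥ := ne_bot_of_le_ne_bot EReal.zero_ne_bot (hpos w)
  rw [← EReal.coe_toReal htop hbot] at hterm ⊢
  rw [← EReal.coe_div, EReal.coe_le_coe_iff, div_le_iff₀ hp] at hterm
  rw [EReal.coe_le_coe_iff, div_le_iff₀' ha]
  exact hterm

theorem subgradient_of_polar_subgradient_general {n : ℕ}
    (φ : EuclideanSpace ℝ (Fin n) → EReal)
    (hpos : ∀ w, 0 ≤ φ w)
    (x y : EuclideanSpace ℝ (Fin n)) (hφx : 0 < φ x) (hφx' : φ x ≠ ⊤)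
    (hmem : φ x * polarTransform φ y = ((⟪x, y⟫ - 1 : ℝ) : EReal) ∧ 1 < ⟪x, y⟫)
    (z : EuclideanSpace ℝ (Fin n)) (hzdef : z = ((φ x).toReal / (⟪x, y⟫ - 1)) • y) :
    (∀ w, φ x + ((⟪w - x, z⟫ : ℝ) : EReal) ≤ φ w) ∧
      ((⟪x, z⟫ : ℝ) : EReal) ≠ φ x ∧
      y = (⟪x, z⟫ - (φ x).toReal)⁻¹ • z := by
  obtain ⟨hA, hxy⟩ := hmem
  set c := (φ x).toReal
  set s := ⟪x, y⟫ - 1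
  have hφx_eq : φ x = c :=
    (EReal.coe_toReal hφx' (ne_bot_of_le_ne_bot EReal.zero_ne_bot hφx.le)).symm
  have hc : 0 < c := EReal.coe_pos.1 (hφx_eq ▸ hφx)
  have hs : 0 < s := sub_pos.2 hxy
  rw [hφx_eq] at hA
  have hminor := coe_div_le_of_polarTransform_le hpos (div_pos hs hc)
    (EReal.eq_coe_div_of_coe_mul_eq hc hA).le
  have hinner : ∀ w, ⟪w, z⟫ - c / s = (⟪w, y⟫ - 1) / (s / c) := fun w ↦ by
    rw [hzdef, real_inner_smul_right]
    field_simp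
  have hxz : ⟪x, z⟫ - c / s = c := by
    rw [hinner x, div_div_eq_mul_div]
    exact mul_div_cancel_left₀ c hs.ne'
  refine ⟨?_, ?_, ?_⟩
  · refine forall_add_inner_sub_le_of_affine_minorant (b := -(c / s)) (fun w ↦ ?_) ?_
    · simpa only [← sub_eq_add_neg, hinner] using hminor w
    · rw [← sub_eq_add_neg, hxz, hφx_eq]
  · rw [hφx_eq, Ne, EReal.coe_eq_coe_iff]
    have := div_pos hc hs
    linarith
  · have hdiff : ⟪x, z⟫ - c = c / s := by linarith
    rw [hdiff, hzdef, smul_smul, inv_mul_cancel₀ (div_pos hc hs).ne', one_smul]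

/-- for `φ ∈ Cvx₀(ℝⁿ)`, `x` with `0 < φ(x) < ∞`, and any `y ∈ ∂°φ(x)`
(i.e. `φ(x)·Aφ(y) = ⟨x,y⟩ − 1 > 0`), the point `z = y·φ(x)/(⟨x,y⟩ − 1)` belongs to the
classical subdifferential `∂φ(x)`, satisfies `⟨x,z⟩ ≠ φ(x)`, and `y = z/(⟨x,z⟩ − φ(x))`. -/
theorem subgradient_of_polar_subgradient {n : ℕ}
    (φ : EuclideanSpace ℝ (Fin n) → EReal)
    (hpos : ∀ w, 0 ≤ φ w) (h0 : φ 0 = 0)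
    (hlsc : LowerSemicontinuous φ)
    (hconv : ∀ (u v : EuclideanSpace ℝ (Fin n)) (a b : ℝ), 0 ≤ a → 0 ≤ b → a + b = 1 →
      φ (a • u + b • v) ≤ (a : EReal) * φ u + (b : EReal) * φ v)
    (x y : EuclideanSpace ℝ (Fin n)) (hφx : 0 < φ x) (hφx' : φ x ≠ ⊤)
    (hmem : φ x * polarTransform φ y = ((⟪x, y⟫ - 1 : ℝ) : EReal) ∧ 1 < ⟪x, y⟫)
    (z : EuclideanSpace ℝ (Fin n)) (hzdef : z = ((φ x).toReal / (⟪x, y⟫ - 1)) • y) :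
    (∀ w, φ x + ((⟪w - x, z⟫ : ℝ) : EReal) ≤ φ w) ∧
      ((⟪x, z⟫ : ℝ) : EReal) ≠ φ x ∧
      y = (⟪x, z⟫ - (φ x).toReal)⁻¹ • z :=
  subgradient_of_polar_subgradient_general φ hpos x y hφx hφx' hmem z hzdef
end
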